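/- Let (r_1, …, r_a) be a composition of r+1 with a ≥ 2, let (k_{x_1}, …, k_r) ∈ D_{(r_1⋯r_a)}, set w = Π_2 Π_3 ⋯ Π_a, and let λ = (p_1, …, p_m) be a composition of r+1. Assume that w(α) is a negative root for every α ∈ Δ_λ. Then: (i) for every α ∈ Δ_λ there is a unique index l(α) ∈ {2, …, a} such that Π_{l(α)+1} Π_{l(α)+2} ⋯ Π_a(α) is a simple root (the empty product, when l(α) = a, being the identity) and Π_{l(α)} Π_{l(α)+1} ⋯ Π_a(α) is a negative root; and (ii) if both α_i ∈ Δ_λ and α_{i+1} ∈ Δ_λ, then l(α_{i+1}) ≤ l(α_i) − 1; in particular, if l(α_i) = 2 then α_{i+1} ∉ Δ_λ. -/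

import Mathlib

open Equiv Finset

/-- The simple reflection `s i = (i, i+1)` (1-based) in `S_{r+1}`, for `1 ≤ i ≤ r`;
the junk value `1` otherwise. -/
def sr (r i : ℕ) : Equiv.Perm (Fin (r + 1)) :=
  if h : 1 ≤ i ∧ i ≤ r then Equiv.swap ⟨i - 1, by omega⟩ ⟨i, by omega⟩ else 1

/-- The cycle `π_k` with ambient index `i`, i.e. `s_i s_{i-1} ⋯ s_k`
(the identity when `k = i + 1`). -/
def cyc (r i k : ℕ) : Equiv.Perm (Fin (r + 1)) :=
  ((List.range (i + 1 - k)).map fun t => sr r (i - t)).prod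

/-- The product `π_{k i} π_{k (i+1)} ⋯ π_{k j}`, the factor `π_{k t}` being the
cycle with ambient index `t`. -/
def cycProd (r : ℕ) (k : ℕ → ℕ) (i j : ℕ) : Equiv.Perm (Fin (r + 1)) :=
  ((List.range' i (j + 1 - i)).map fun t => cyc r t (k t)).prod

/-- Coxeter length of a permutation: the number of inversions. -/
def lenInv {n : ℕ} (w : Equiv.Perm (Fin n)) : ℕ :=
  (Finset.univ.filter fun p : Fin n × Fin n => p.1 < p.2 ∧ w p.2 < w p.1).card

/-- Partial sums of a (1-based) composition: `psum c j = c 1 + ⋯ + c j`. -/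
def psum (c : ℕ → ℕ) (j : ℕ) : ℕ := ∑ i ∈ Finset.Icc 1 j, c i

/-- The transpose partition of `(t 1, …, t b)`: `transp b t j = #{i ∈ [1,b] : t i ≥ j}`. -/
def transp (b : ℕ) (t : ℕ → ℕ) (j : ℕ) : ℕ :=
  ((Finset.Icc 1 b).filter fun i => j ≤ t i).card

/-- The element of `Fin (r+1)` with value `i` (for `i ≤ r`). -/
def finOf (r i : ℕ) : Fin (r + 1) := ⟨min i r, by omega⟩

/-- `w(α_i)` is a positive root, where `α_i = e_i − e_{i+1}` (1-based), i.e. the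
0-based pair `(i-1, i)`; `w(e_c − e_d) = e_{w c} − e_{w d}` is positive iff `w c < w d`. -/
def posRoot (r : ℕ) (w : Equiv.Perm (Fin (r + 1))) (i : ℕ) : Prop :=
  (w (finOf r (i - 1)) : ℕ) < w (finOf r i)

/-- `w(α_i)` is a negative root. -/
def negRoot (r : ℕ) (w : Equiv.Perm (Fin (r + 1))) (i : ℕ) : Prop :=
  (w (finOf r i) : ℕ) < w (finOf r (i - 1))

/-- `w(α_i)` is a simple root. -/
def simpleRoot (r : ℕ) (w : Equiv.Perm (Fin (r + 1))) (i : ℕ) : Prop :=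
  (w (finOf r i) : ℕ) = (w (finOf r (i - 1)) : ℕ) + 1

/-- `w(α_i) = α_j` (as roots: the image pair is `(j-1, j)` in 0-based indices). -/
def eqRoot (r : ℕ) (w : Equiv.Perm (Fin (r + 1))) (i j : ℕ) : Prop :=
  (w (finOf r (i - 1)) : ℕ) = j - 1 ∧ (w (finOf r i) : ℕ) = j

/-- `Π_l Π_{l+1} ⋯ Π_a` for the composition `c` and tuple `k`, where
`Π_j = π_{k_{x_{j-1}}} ⋯ π_{k_{x_j - 1}}` and `x_j = psum c j`. -/
def tailProd (r a : ℕ) (c k : ℕ → ℕ) (l : ℕ) : Equiv.Perm (Fin (r + 1)) :=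
  ((List.range' l (a + 1 - l)).map fun j => cycProd r k (psum c (j - 1)) (psum c j - 1)).prod

/-- The subgroup `W(P)`: generated by the simple reflections `s i` with `i ∈ [1,r]`
avoiding the partial sums `x 1, …, x (a-1)` of the composition `c`. -/
def WP (r a : ℕ) (c : ℕ → ℕ) : Subgroup (Equiv.Perm (Fin (r + 1))) :=
  Subgroup.closure
    {g | ∃ i, 1 ≤ i ∧ i ≤ r ∧ (∀ j, 1 ≤ j → j ≤ a - 1 → i ≠ psum c j) ∧ g = sr r i}

/-- `α_i ∈ Δ_λ` for the composition `λ = (p 1, …, p m)` of `r+1`. -/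
def inDelta (r m : ℕ) (p : ℕ → ℕ) (i : ℕ) : Prop :=
  1 ≤ i ∧ i ≤ r ∧ ∀ j, 1 ≤ j → j ≤ m - 1 → i ≠ psum p j

/-- The left coset `H · g`. -/
def cosetOf {G : Type*} [Group G] (H : Subgroup G) (g : G) : Set G :=
  {x | ∃ h ∈ H, x = h * g}

/-- The (0-based) positions `u` and `v` lie in the same block of the composition
`μ^⊤ = transp b t`; a negative root `e_c − e_d` lies in `Φ⁻_{μ^⊤}` iff its two
indices lie in the same block. -/
def sameBlock (b : ℕ) (t : ℕ → ℕ) (u v : ℕ) : Prop :=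
  ∃ j, 1 ≤ j ∧ j ≤ t 1 ∧
    psum (transp b t) (j - 1) ≤ u ∧ u < psum (transp b t) j ∧
    psum (transp b t) (j - 1) ≤ v ∧ v < psum (transp b t) j

/-! Read on 0-based positions, a block `Π_l` permutes `0, …, x_l - 1` and fixes the rest. Because
the `k`'s increase inside a block, `Π_l` sends a simple root to a simple root or to a root
`e_c - e_d` with `max c d ≥ x_{l-1}`, and never sends two adjacent simple roots both to negative
roots; and a negative root `e_c - e_d` with `c ≥ x_l` stays negative under `Π_l`, hence under
`Π_2 ⋯ Π_l`.

Applying the blocks of `w` to `α ∈ Δ_λ` one at a time from the right, `α` stays simple until the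
first block that makes it non-simple; it cannot become positive there (it would stay positive,
while `w α` is negative), so it becomes negative and remains so: this is `l(α)`, and it is unique.
For (ii), `l(α_{i+1}) > l(α_i)` would make `α_i` positive at level `l(α_i)`, and equal levels
would give two descents inside one block. -/

theorem Nat.exists_not_and_succ_of_not_of_le {P : ℕ → Prop} {m n : ℕ} (hmn : m ≤ n)
    (hm : ¬ P m) (hn : P n) : ∃ l, m ≤ l ∧ l < n ∧ ¬ P l ∧ P (l + 1) := by
  induction n, hmn using Nat.le_induction with
  | base => exact absurd hn hm
  | succ n hmn ih =>
    by_cases hPn : P n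
    · obtain ⟨l, hml, hln, hl⟩ := ih hPn
      exact ⟨l, hml, by omega, hl⟩
    · exact ⟨n, hmn, by omega, hPn, hn⟩

theorem Equiv.Perm.apply_lt_of_fixed_above {α : Type*} [LinearOrder α] (σ : Perm α) {u v : α}
    (hfix : ∀ w, u ≤ w → σ w = w) (hvu : v < u) : σ v < u := by
  by_contra! h
  have hv : σ v = v := σ.injective (hfix _ h)
  exact (hv ▸ h).not_gt hvu

theorem psum_mono (c : ℕ → ℕ) : Monotone (psum c) := fun _ _ h =>
  Finset.sum_le_sum_of_subset (Finset.Icc_subset_Icc_right h)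

section Cycles

variable {r : ℕ}

theorem sr_apply {i : ℕ} (h1 : 1 ≤ i) (h2 : i ≤ r) (w : Fin (r + 1)) :
    (sr r i w : ℕ) = if (w : ℕ) = i - 1 then i else if (w : ℕ) = i then i - 1 else w := by
  rw [sr, dif_pos ⟨h1, h2⟩, swap_apply_def]
  simp only [Fin.ext_iff]
  split_ifs <;> simp_all

theorem cyc_eq_sr_mul {i κ : ℕ} (hκ : 1 ≤ κ) (hκi : κ ≤ i) :
    cyc r i κ = sr r i * cyc r (i - 1) κ := by
  rw [cyc, cyc, show i + 1 - κ = (i - 1 + 1 - κ) + 1 by omega, List.range_succ_eq_map,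
    List.map_cons, List.prod_cons, List.map_map, Nat.sub_zero]
  congr 3
  funext t
  simp only [Function.comp_apply]
  congr 1
  omega

theorem cyc_apply {i κ : ℕ} (hκ : 1 ≤ κ) (hκi : κ ≤ i + 1) (hi : i ≤ r) (w : Fin (r + 1)) :
    (cyc r i κ w : ℕ) =
      if (w : ℕ) + 1 = κ then i else if κ ≤ (w : ℕ) ∧ (w : ℕ) ≤ i then (w : ℕ) - 1 else w := by
  induction hn : i + 1 - κ generalizing i with
  | zero =>
    obtain rfl : κ = i + 1 := by omega
    simp only [cyc, Nat.sub_self, List.range_zero, List.map_nil, List.prod_nil, Perm.one_apply]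
    split_ifs <;> omega
  | succ n ih =>
    rw [cyc_eq_sr_mul hκ (by omega), Perm.mul_apply, sr_apply (by omega) hi,
      ih (by omega) (by omega) (by omega)]
    split_ifs <;> omega

theorem cyc_apply_of_lt {i κ : ℕ} (hκ : 1 ≤ κ) (hκi : κ ≤ i + 1) (hi : i ≤ r) {w : Fin (r + 1)}
    (hw : (w : ℕ) + 1 < κ ∨ i < w) : cyc r i κ w = w := by
  apply Fin.ext
  rw [cyc_apply hκ hκi hi]
  split_ifs <;> omega

theorem cycProd_eq_mul (k : ℕ → ℕ) {x y : ℕ} (h : x ≤ y) :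
    cycProd r k x y = cyc r x (k x) * cycProd r k (x + 1) y := by
  rw [cycProd, cycProd, show y + 1 - x = (y + 1 - (x + 1)) + 1 by omega, List.range'_succ,
    List.map_cons, List.prod_cons]

theorem cycProd_eq_one (k : ℕ → ℕ) {x y : ℕ} (h : y < x) : cycProd r k x y = 1 := by
  simp [cycProd, show y + 1 - x = 0 by omega]

theorem cycProd_apply_of_forall {k : ℕ → ℕ} {x y : ℕ} {w : Fin (r + 1)}
    (h : ∀ t, x ≤ t → t ≤ y → cyc r t (k t) w = w) : cycProd r k x y w = w := by
  have : cycProd r k x y ∈ MulAction.stabilizer (Perm (Fin (r + 1))) w := by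
    refine list_prod_mem fun g hg => ?_
    simp only [List.mem_map, List.mem_range'_1] at hg
    obtain ⟨t, ht, rfl⟩ := hg
    exact h t ht.1 (by omega)
  simpa [MulAction.mem_stabilizer_iff, Perm.smul_def] using this

end Cycles

/-- Conditions (a) and (b) of `D` on the indices `x ≤ i ≤ y`. -/
structure AdmissibleBlock (r : ℕ) (k : ℕ → ℕ) (x y : ℕ) : Prop where
  le : y ≤ r
  bounds : ∀ i, x ≤ i → i ≤ y → 1 ≤ k i ∧ k i ≤ i + 1
  strictMono : ∀ i, x ≤ i → i < y → k i < k (i + 1)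

/-- `σ (e_u - e_v) = e_{σ u} - e_{σ v}` is a negative root and `σ u ≥ x`. -/
def IsNegAbove {n : ℕ} (σ : Perm (Fin n)) (x : ℕ) (u v : Fin n) : Prop :=
  (σ v : ℕ) < σ u ∧ x ≤ σ u

namespace AdmissibleBlock

variable {r : ℕ} {k : ℕ → ℕ} {x y : ℕ}

theorem succ (h : AdmissibleBlock r k x y) : AdmissibleBlock r k (x + 1) y :=
  ⟨h.le, fun i hi => h.bounds i (by omega), fun i hi => h.strictMono i (by omega)⟩

theorem k_le (h : AdmissibleBlock r k x y) {t : ℕ} (hxt : x ≤ t) (hty : t ≤ y) : k x ≤ k t := by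
  induction t, hxt using Nat.le_induction with
  | base => rfl
  | succ t hxt ih => exact (ih (by omega)).trans (h.strictMono t hxt (by omega)).le

theorem cycProd_apply_of_lt (h : AdmissibleBlock r k x y) {w : Fin (r + 1)} (hw : y < w) :
    cycProd r k x y w = w :=
  cycProd_apply_of_forall fun t hxt hty =>
    cyc_apply_of_lt (h.bounds t hxt hty).1 (h.bounds t hxt hty).2 (hty.trans h.le)
      (Or.inr (by omega))

theorem cycProd_apply_of_lt_k (h : AdmissibleBlock r k x y) {w : Fin (r + 1)}
    (hw : (w : ℕ) + 1 < k x) : cycProd r k x y w = w :=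
  cycProd_apply_of_forall fun t hxt hty =>
    cyc_apply_of_lt (h.bounds t hxt hty).1 (h.bounds t hxt hty).2 (hty.trans h.le)
      (Or.inl (by have := h.k_le hxt hty; omega))

theorem le_cycProd_apply_of_descent (h : AdmissibleBlock r k x y) {v₁ v₂ : Fin (r + 1)}
    (h12 : (v₂ : ℕ) = v₁ + 1) (hdesc : (cycProd r k x y v₂ : ℕ) < cycProd r k x y v₁) :
    k x - 1 ≤ cycProd r k x y v₂ := by
  by_contra! hlt
  have hv₂ : cycProd r k x y v₂ = v₂ :=
    (cycProd r k x y).injective (h.cycProd_apply_of_lt_k (by omega))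
  have hv₁ : cycProd r k x y v₁ = v₁ := h.cycProd_apply_of_lt_k (by omega)
  rw [hv₁, hv₂] at hdesc
  omega

theorem cycProd_trichotomy (h : AdmissibleBlock r k x y) {v₁ v₂ : Fin (r + 1)}
    (h12 : (v₂ : ℕ) = v₁ + 1) :
    (cycProd r k x y v₂ : ℕ) = cycProd r k x y v₁ + 1 ∨
      IsNegAbove (cycProd r k x y) x v₁ v₂ ∨ IsNegAbove (cycProd r k x y) x v₂ v₁ := by
  induction hn : y + 1 - x generalizing x with
  | zero => simp [cycProd_eq_one k (show y < x by omega), h12]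
  | succ n ih =>
    have hxy : x ≤ y := by omega
    obtain ⟨hk1, hk2⟩ := h.bounds x le_rfl hxy
    have IH := ih h.succ (by omega)
    simp only [IsNegAbove] at IH ⊢
    rw [cycProd_eq_mul k hxy, Perm.mul_apply, Perm.mul_apply,
      cyc_apply hk1 hk2 (hxy.trans h.le), cyc_apply hk1 hk2 (hxy.trans h.le)]
    split_ifs <;> omega

theorem not_cycProd_double_descent (h : AdmissibleBlock r k x y) {v₁ v₂ v₃ : Fin (r + 1)}
    (h12 : (v₂ : ℕ) = v₁ + 1) (h23 : (v₃ : ℕ) = v₂ + 1) :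
    ¬ ((cycProd r k x y v₂ : ℕ) < cycProd r k x y v₁ ∧
      (cycProd r k x y v₃ : ℕ) < cycProd r k x y v₂) := by
  induction hn : y + 1 - x generalizing x with
  | zero => simp [cycProd_eq_one k (show y < x by omega), h12, h23]
  | succ n ih =>
    have hxy : x ≤ y := by omega
    obtain ⟨hk1, hk2⟩ := h.bounds x le_rfl hxy
    have hy := hxy.trans h.le
    rcases hxy.lt_or_eq with hxy' | rfl
    · have IH := ih h.succ (by omega)
      have T12 := h.succ.cycProd_trichotomy h12
      have T23 := h.succ.cycProd_trichotomy h23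
      have E := not_or_of_imp (h.succ.le_cycProd_apply_of_descent h12)
      have hkk := h.strictMono x le_rfl hxy'
      simp only [IsNegAbove] at T12 T23
      rw [cycProd_eq_mul k hxy, Perm.mul_apply, Perm.mul_apply, Perm.mul_apply,
        cyc_apply hk1 hk2 hy, cyc_apply hk1 hk2 hy, cyc_apply hk1 hk2 hy]
      split_ifs <;> omega
    · rw [cycProd_eq_mul k le_rfl, cycProd_eq_one k (Nat.lt_succ_self x), mul_one,
        cyc_apply hk1 hk2 hy, cyc_apply hk1 hk2 hy, cyc_apply hk1 hk2 hy]
      split_ifs <;> omega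

end AdmissibleBlock

/-- The block `Π_l`. -/
def blockProd (r : ℕ) (c k : ℕ → ℕ) (l : ℕ) : Perm (Fin (r + 1)) :=
  cycProd r k (psum c (l - 1)) (psum c l - 1)

theorem tailProd_eq_mul {r a : ℕ} (c k : ℕ → ℕ) {l : ℕ} (hl : l ≤ a) :
    tailProd r a c k l = blockProd r c k l * tailProd r a c k (l + 1) := by
  rw [tailProd, tailProd, show a + 1 - l = (a + 1 - (l + 1)) + 1 by omega, List.range'_succ,
    List.map_cons, List.prod_cons, blockProd]

theorem tailProd_succ_self (r a : ℕ) (c k : ℕ → ℕ) : tailProd r a c k (a + 1) = 1 := by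
  simp [tailProd]

/-- Conditions (a) and (b) of `D` on each of the blocks of `Π_2, …, Π_a`, all nonempty. -/
structure Admissible (r a : ℕ) (c k : ℕ → ℕ) : Prop where
  block : ∀ l, 2 ≤ l → l ≤ a → AdmissibleBlock r k (psum c (l - 1)) (psum c l - 1)
  psum_pos : ∀ l, 2 ≤ l → l ≤ a → 0 < psum c l

theorem admissible_of_mem_D {r a : ℕ} {c k : ℕ → ℕ} (hc : ∀ j, 1 ≤ j → j ≤ a → 1 ≤ c j)
    (hcsum : psum c a = r + 1) (hka : ∀ i, psum c 1 ≤ i → i ≤ r → 1 ≤ k i ∧ k i ≤ i + 1)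
    (hkb : ∀ j, 2 ≤ j → j ≤ a → ∀ i, psum c (j - 1) ≤ i → i + 1 ≤ psum c j - 1 →
      k i < k (i + 1)) :
    Admissible r a c k := by
  refine ⟨fun l hl2 hla => ⟨?_, fun i hi hi' => ?_, fun i hi hi' => hkb l hl2 hla i hi (by omega)⟩,
    fun l hl2 hla => ?_⟩
  · have := psum_mono c hla
    omega
  · have := psum_mono c hla
    exact hka i ((psum_mono c (by omega : 1 ≤ l - 1)).trans hi) (by omega)
  · have hc1 : psum c 1 = c 1 := by simp [psum]
    have := psum_mono c (by omega : 1 ≤ l)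
    have := hc 1 le_rfl (by omega)
    omega

/-- The defining property of `l(α_i)`. -/
def IsDescentLevel (r a : ℕ) (c k : ℕ → ℕ) (i l : ℕ) : Prop :=
  2 ≤ l ∧ l ≤ a ∧ simpleRoot r (tailProd r a c k (l + 1)) i ∧ negRoot r (tailProd r a c k l) i

namespace Admissible

variable {r a : ℕ} {c k : ℕ → ℕ}

theorem blockProd_apply_of_le (hD : Admissible r a c k) {l : ℕ} (hl2 : 2 ≤ l) (hla : l ≤ a)
    {w : Fin (r + 1)} (hw : psum c l ≤ w) : blockProd r c k l w = w :=
  (hD.block l hl2 hla).cycProd_apply_of_lt (by have := hD.psum_pos l hl2 hla; omega)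

theorem isNegAbove_of_succ (hD : Admissible r a c k) {l : ℕ} (hl2 : 2 ≤ l) (hla : l ≤ a)
    {u v : Fin (r + 1)} (h : IsNegAbove (tailProd r a c k (l + 1)) (psum c l) u v) :
    IsNegAbove (tailProd r a c k l) (psum c (l - 1)) u v := by
  obtain ⟨hvu, hu⟩ := h
  have hfix : ∀ w, tailProd r a c k (l + 1) u ≤ w → blockProd r c k l w = w :=
    fun w hw => hD.blockProd_apply_of_le hl2 hla (hu.trans hw)
  simp only [IsNegAbove, tailProd_eq_mul c k hla, Perm.mul_apply, hfix _ le_rfl]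
  exact ⟨Perm.apply_lt_of_fixed_above _ hfix hvu, (psum_mono c (by omega)).trans hu⟩

theorem isNegAbove_of_le (hD : Admissible r a c k) {l l' : ℕ} (hl' : 2 ≤ l') (hll : l' ≤ l)
    (hla : l ≤ a + 1) {u v : Fin (r + 1)}
    (h : IsNegAbove (tailProd r a c k l) (psum c (l - 1)) u v) :
    IsNegAbove (tailProd r a c k l') (psum c (l' - 1)) u v := by
  induction l, hll using Nat.le_induction with
  | base => exact h
  | succ l hl ih => exact ih (by omega) (hD.isNegAbove_of_succ (by omega) (by omega) h)

theorem tailProd_trichotomy (hD : Admissible r a c k) {l : ℕ} (hl2 : 2 ≤ l) (hla : l ≤ a)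
    {u v : Fin (r + 1)}
    (hsimple : (tailProd r a c k (l + 1) v : ℕ) = tailProd r a c k (l + 1) u + 1) :
    (tailProd r a c k l v : ℕ) = tailProd r a c k l u + 1 ∨
      IsNegAbove (tailProd r a c k l) (psum c (l - 1)) u v ∨
      IsNegAbove (tailProd r a c k l) (psum c (l - 1)) v u := by
  rw [tailProd_eq_mul c k hla]
  exact (hD.block l hl2 hla).cycProd_trichotomy hsimple

theorem isNegAbove_of_isDescentLevel (hD : Admissible r a c k) {i l : ℕ}
    (h : IsDescentLevel r a c k i l) :
    IsNegAbove (tailProd r a c k l) (psum c (l - 1)) (finOf r (i - 1)) (finOf r i) := by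
  obtain ⟨hl2, hla, hs, hn⟩ := h
  unfold negRoot at hn
  rcases hD.tailProd_trichotomy hl2 hla hs with h | h | h
  · omega
  · exact h
  · exact absurd h.1 (by omega)

theorem eq_of_isDescentLevel (hD : Admissible r a c k) {i l l' : ℕ}
    (h : IsDescentLevel r a c k i l) (h' : IsDescentLevel r a c k i l') : l = l' := by
  have no_lt : ∀ {l l'}, IsDescentLevel r a c k i l → IsDescentLevel r a c k i l' → ¬ l < l' :=
    fun {l l'} h h' hlt => by
      obtain ⟨hl2, -, hs, -⟩ := h
      have := (hD.isNegAbove_of_le (l' := l + 1) (by omega) hlt (by have := h'.2.1; omega)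
        (hD.isNegAbove_of_isDescentLevel h')).1
      unfold simpleRoot at hs
      omega
  exact le_antisymm (not_lt.mp (no_lt h' h)) (not_lt.mp (no_lt h h'))

theorem existsUnique_isDescentLevel (hD : Admissible r a c k) (ha : 2 ≤ a) {i : ℕ}
    (hi1 : 1 ≤ i) (hir : i ≤ r) (hneg : negRoot r (tailProd r a c k 2) i) :
    ∃! l, IsDescentLevel r a c k i l := by
  have hadj : (finOf r i : ℕ) = finOf r (i - 1) + 1 := by simp only [finOf]; omega
  unfold negRoot at hneg
  obtain ⟨l, hl2, hla, hns, hs⟩ := Nat.exists_not_and_succ_of_not_of_le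
    (P := fun l => simpleRoot r (tailProd r a c k l) i) (by omega : 2 ≤ a + 1)
    (by unfold simpleRoot; omega) (by simp [simpleRoot, tailProd_succ_self, hadj])
  have hlev : IsDescentLevel r a c k i l := by
    refine ⟨hl2, by omega, hs, ?_⟩
    rcases hD.tailProd_trichotomy hl2 (by omega) hs with h | h | h
    · exact absurd h hns
    · exact h.1
    · have := (hD.isNegAbove_of_le le_rfl hl2 (by omega) h).1
      omega
  exact ⟨l, hlev, fun l' hl' => hD.eq_of_isDescentLevel hl' hlev⟩

theorem lt_of_isDescentLevel_succ (hD : Admissible r a c k) {i li li1 : ℕ}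
    (h : IsDescentLevel r a c k i li) (h' : IsDescentLevel r a c k (i + 1) li1) : li1 < li := by
  by_contra! hle
  obtain ⟨hl2, hla, hs, hn⟩ := h
  unfold simpleRoot at hs
  unfold negRoot at hn
  rcases hle.lt_or_eq with hlt | rfl
  · have h₁ : IsNegAbove (tailProd r a c k (li + 1)) (psum c li) (finOf r i) (finOf r (i + 1)) :=
      hD.isNegAbove_of_le (by omega) hlt (by have := h'.2.1; omega)
        (hD.isNegAbove_of_isDescentLevel h')
    have h₂ : IsNegAbove (tailProd r a c k (li + 1)) (psum c li) (finOf r i) (finOf r (i - 1)) :=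
      ⟨by omega, h₁.2⟩
    have := (hD.isNegAbove_of_succ hl2 hla h₂).1
    omega
  · obtain ⟨-, -, hs', hn'⟩ := h'
    rw [tailProd_eq_mul c k hla] at hn hn'
    exact (hD.block li hl2 hla).not_cycProd_double_descent hs hs' ⟨hn, hn'⟩

end Admissible

theorem stmt15_general (r a m : ℕ) (ha : 2 ≤ a) (c k p : ℕ → ℕ)
    (hc : ∀ j, 1 ≤ j → j ≤ a → 1 ≤ c j) (hcsum : psum c a = r + 1)
    (hka : ∀ i, psum c 1 ≤ i → i ≤ r → 1 ≤ k i ∧ k i ≤ i + 1)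
    (hkb : ∀ j, 2 ≤ j → j ≤ a → ∀ i, psum c (j - 1) ≤ i → i + 1 ≤ psum c j - 1 →
      k i < k (i + 1))
    (hneg : ∀ i, inDelta r m p i → negRoot r (tailProd r a c k 2) i) :
    (∀ i, inDelta r m p i →
      ∃! l, 2 ≤ l ∧ l ≤ a ∧ simpleRoot r (tailProd r a c k (l + 1)) i ∧
        negRoot r (tailProd r a c k l) i) ∧
    (∀ i li li1, inDelta r m p i → inDelta r m p (i + 1) →
      (2 ≤ li ∧ li ≤ a ∧ simpleRoot r (tailProd r a c k (li + 1)) i ∧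
        negRoot r (tailProd r a c k li) i) →
      (2 ≤ li1 ∧ li1 ≤ a ∧ simpleRoot r (tailProd r a c k (li1 + 1)) (i + 1) ∧
        negRoot r (tailProd r a c k li1) (i + 1)) →
      li1 ≤ li - 1) ∧
    (∀ i, inDelta r m p i →
      (simpleRoot r (tailProd r a c k 3) i ∧ negRoot r (tailProd r a c k 2) i) →
      ¬ inDelta r m p (i + 1)) := by
  have hD : Admissible r a c k := admissible_of_mem_D hc hcsum hka hkb
  have level : ∀ i, inDelta r m p i → ∃! l, IsDescentLevel r a c k i l :=
    fun i hi => hD.existsUnique_isDescentLevel ha hi.1 hi.2.1 (hneg i hi)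
  refine ⟨level, fun i li li1 _ _ h h' => ?_, fun i _ h hi' => ?_⟩
  · have := hD.lt_of_isDescentLevel_succ h h'
    omega
  · obtain ⟨l, hl, -⟩ := level (i + 1) hi'
    have := hD.lt_of_isDescentLevel_succ ⟨le_rfl, ha, h⟩ hl
    exact absurd hl.1 (by omega)

/-- if `w = Π_2 ⋯ Π_a` sends every `α ∈ Δ_λ` to a negative root,
then (i) each `α_i ∈ Δ_λ` has a unique index `l(α_i) ∈ {2, …, a}` with
`Π_{l+1} ⋯ Π_a(α_i)` simple and `Π_l ⋯ Π_a(α_i)` negative; (ii) if `α_i, α_{i+1} ∈ Δ_λ`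
then `l(α_{i+1}) ≤ l(α_i) − 1`; in particular if `l(α_i) = 2` then `α_{i+1} ∉ Δ_λ`. -/
theorem stmt15 (r a m : ℕ) (hr : 1 ≤ r) (ha : 2 ≤ a) (c k p : ℕ → ℕ)
    (hc : ∀ j, 1 ≤ j → j ≤ a → 1 ≤ c j) (hcsum : psum c a = r + 1)
    (hka : ∀ i, psum c 1 ≤ i → i ≤ r → 1 ≤ k i ∧ k i ≤ i + 1)
    (hkb : ∀ j, 2 ≤ j → j ≤ a → ∀ i, psum c (j - 1) ≤ i → i + 1 ≤ psum c j - 1 →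
      k i < k (i + 1))
    (hm : 1 ≤ m) (hp : ∀ j, 1 ≤ j → j ≤ m → 1 ≤ p j) (hpsum : psum p m = r + 1)
    (hneg : ∀ i, inDelta r m p i → negRoot r (tailProd r a c k 2) i) :
    (∀ i, inDelta r m p i →
      ∃! l, 2 ≤ l ∧ l ≤ a ∧ simpleRoot r (tailProd r a c k (l + 1)) i ∧
        negRoot r (tailProd r a c k l) i) ∧
    (∀ i li li1, inDelta r m p i → inDelta r m p (i + 1) →
      (2 ≤ li ∧ li ≤ a ∧ simpleRoot r (tailProd r a c k (li + 1)) i ∧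
        negRoot r (tailProd r a c k li) i) →
      (2 ≤ li1 ∧ li1 ≤ a ∧ simpleRoot r (tailProd r a c k (li1 + 1)) (i + 1) ∧
        negRoot r (tailProd r a c k li1) (i + 1)) →
      li1 ≤ li - 1) ∧
    (∀ i, inDelta r m p i →
      (simpleRoot r (tailProd r a c k 3) i ∧ negRoot r (tailProd r a c k 2) i) →
      ¬ inDelta r m p (i + 1)) :=
  stmt15_general r a m ha c k p hc hcsum hka hkb hneg
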